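/- arXiv:1712.06481 — 4 statements merged into one kernel-verified Lean document; each statement's English description precedes it below -/
import Mathlib

section
/- Every cluster ⋈ chordal graph is 2-simplicial: if a graph G = (V, E1 ∪ E2) is the edge-wise union of a chordal graph (V, E1) and a cluster graph (V, E2), then there is an ordering v_1,…,v_n of V such that for each i, the closed later neighborhood N_G[v_i] ∩ {v_i,…,v_n} can be covered by at most 2 cliques of G. -/
/-- `G` has an induced cycle on `n` vertices. -/
def HasInducedCycle {V : Type*} (G : SimpleGraph V) (n : ℕ) : Prop :=
  ∃ f : ZMod n → V, Function.Injective f ∧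
    ∀ i j : ZMod n, G.Adj (f i) (f j) ↔ (j = i + 1 ∨ i = j + 1)

/-!
A chordal graph has a perfect elimination ordering. Given a vertex `u` and a non-neighbour `x`,
let `C` be the component of `x` in `G - N[u]`. Every vertex of `N(C)` lies in `N(u)`, and any two
of them are adjacent, since otherwise a shortest path between them through `C`, closed up by `u`,
would be an induced cycle of length at least four. By induction on `C ∪ N(C)` (which misses `u`),
some vertex of `C` is simplicial there, hence in `G`, and it is not adjacent to `u`.

Order `V` by a perfect elimination ordering of `G1`. The closed later neighbourhood of `v` splits
into the vertices of the cluster of `v`, a clique of `G2`, and the rest, which are later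
`G1`-neighbours of `v` and so form a clique of `G1`.
-/

namespace SimpleGraph

variable {V : Type*} (G : SimpleGraph V)

def IsChordal : Prop := ∀ n, 4 ≤ n → ¬ HasInducedCycle G n

def IsSimplicial (s : Set V) (v : V) : Prop := G.IsClique {w | w ∈ s ∧ G.Adj v w}

def induceSpanning (T : Set V) : SimpleGraph V := ((⊤ : G.Subgraph).induce T).spanningCoe

variable {G}

@[simp]
theorem induceSpanning_adj {T : Set V} {a b : V} :
    (G.induceSpanning T).Adj a b ↔ a ∈ T ∧ b ∈ T ∧ G.Adj a b := by
  simp [induceSpanning]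

theorem induceSpanning_mono {T T' : Set V} (h : T ⊆ T') :
    G.induceSpanning T ≤ G.induceSpanning T' :=
  fun _ _ hab => by simp only [induceSpanning_adj] at hab ⊢; exact ⟨h hab.1, h hab.2.1, hab.2.2⟩

theorem Reachable.mem_of_induceSpanning {T : Set V} {a b : V}
    (h : (G.induceSpanning T).Reachable a b) (ha : a ∈ T) : b ∈ T := by
  obtain ⟨w⟩ := h.symm
  cases w with
  | nil => exact ha
  | cons hadj _ => exact (induceSpanning_adj.1 hadj).1

theorem IsSimplicial.anti {s t : Set V} {v : V} (hst : s ⊆ t) (h : G.IsSimplicial t v) :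
    G.IsSimplicial s v :=
  h.subset (Set.ofPred_subset_ofPred.2 fun _ hw => ⟨hst hw.1, hw.2⟩)

namespace Walk

variable {a b : V} (w : G.Walk a b)

theorem dist_getVert_getVert_of_length_eq_dist (hw : w.length = G.dist a b) {i j : ℕ}
    (hij : i ≤ j) (hj : j ≤ w.length) :
    G.dist (w.getVert i) (w.getVert j) = j - i := by
  have hsub : ((w.drop i).take (j - i)).IsSubwalk w :=
    (isSubwalk_take _ _).trans (isSubwalk_drop _ _)
  have hlen := length_eq_dist_of_subwalk hw hsub
  rw [take_length, drop_length, drop_getVert, Nat.add_sub_cancel' hij] at hlen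
  omega

theorem adj_getVert_iff_of_length_eq_dist (hw : w.length = G.dist a b) {i j : ℕ}
    (hi : i ≤ w.length) (hj : j ≤ w.length) :
    G.Adj (w.getVert i) (w.getVert j) ↔ i + 1 = j ∨ j + 1 = i := by
  rw [← dist_eq_one_iff_adj]
  rcases le_total i j with hij | hji
  · rw [w.dist_getVert_getVert_of_length_eq_dist hw hij hj]; omega
  · rw [dist_comm, w.dist_getVert_getVert_of_length_eq_dist hw hji hi]; omega

theorem getVert_injOn_of_length_eq_dist (hw : w.length = G.dist a b) :
    Set.InjOn w.getVert {i | i ≤ w.length} := by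
  intro i hi j hj hij
  rcases le_total i j with h | h
  · have := w.dist_getVert_getVert_of_length_eq_dist hw h hj
    rw [hij, dist_self] at this; omega
  · have := w.dist_getVert_getVert_of_length_eq_dist hw h hi
    rw [hij, dist_self] at this; omega

end Walk

theorem hasInducedCycle_of_path_of_apex {k : ℕ} {g : ℕ → V} {u : V}
    (hg : Set.InjOn g {i | i ≤ k}) (hu : ∀ i ≤ k, g i ≠ u)
    (hadj : ∀ i ≤ k, ∀ j ≤ k, G.Adj (g i) (g j) ↔ i + 1 = j ∨ j + 1 = i)
    (hapex : ∀ i ≤ k, G.Adj (g i) u ↔ i = 0 ∨ i = k) : HasInducedCycle G (k + 2) := by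
  have : Fact (1 < k + 2) := ⟨by omega⟩
  set c : ℕ → V := fun i => if i ≤ k then g i else u with hc
  have hsucc : ∀ i j : ZMod (k + 2), j = i + 1 ↔ j.val = (i.val + 1) % (k + 2) := by
    intro i j
    rw [← ZMod.val_one (k + 2), ← ZMod.val_add, (ZMod.val_injective _).eq_iff]
  have hmod : ∀ i < k + 2, (i + 1) % (k + 2) = if i ≤ k then i + 1 else 0 := by
    intro i hi
    split_ifs with hik
    · exact Nat.mod_eq_of_lt (by omega)
    · rw [show i + 1 = k + 2 by omega, Nat.mod_self]
  refine ⟨fun i => c i.val, fun i j hij => ZMod.val_injective _ ?_, fun i j => ?_⟩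
  · have hi := i.val_lt
    have hj := j.val_lt
    simp only [hc] at hij
    split_ifs at hij with h1 h2 h2
    · exact hg h1 h2 hij
    · exact absurd hij (hu _ h1)
    · exact absurd hij.symm (hu _ h2)
    · omega
  · have hi := i.val_lt
    have hj := j.val_lt
    rw [hsucc, hsucc, hmod _ hi, hmod _ hj]
    by_cases h1 : i.val ≤ k <;> by_cases h2 : j.val ≤ k <;>
      simp only [hc, h1, h2, if_true, if_false]
    · rw [hadj _ h1 _ h2]; omega
    · rw [hapex _ h1]; omega
    · rw [G.adj_comm, hapex _ h2]; omega
    · simp only [SimpleGraph.irrefl, false_iff]; omega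

theorem IsChordal.adj_of_reachable (hG : G.IsChordal) {T : Set V} {u p q : V}
    (hpq : p ≠ q) (hp : G.Adj p u) (hq : G.Adj q u) (huT : u ∉ T)
    (hT : ∀ t ∈ T, G.Adj t u → t = p ∨ t = q) (hreach : (G.induceSpanning T).Reachable p q) :
    G.Adj p q := by
  by_contra hnpq
  obtain ⟨w, hw⟩ := hreach.exists_walk_length_eq_dist
  have hlen : 1 < w.length :=
    hw ▸ hreach.one_lt_dist_of_ne_of_not_adj hpq fun h => hnpq (induceSpanning_adj.1 h).2.2
  have hmem : ∀ i ≤ w.length, w.getVert i ∈ T := by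
    intro i hi
    rcases hi.lt_or_eq with hi | rfl
    · exact (induceSpanning_adj.1 (w.adj_getVert_succ hi)).1
    · have hlast := induceSpanning_adj.1 (w.adj_getVert_succ (i := w.length - 1) (by omega))
      rw [Nat.sub_add_cancel (by omega)] at hlast
      exact hlast.2.1
  have hinj := w.getVert_injOn_of_length_eq_dist hw
  refine hG (w.length + 2) (by omega) (hasInducedCycle_of_path_of_apex (u := u) hinj ?_ ?_ ?_)
  · exact fun i hi h => huT (h ▸ hmem i hi)
  · intro i hi j hj
    rw [← w.adj_getVert_iff_of_length_eq_dist hw hi hj, induceSpanning_adj]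
    simp [hmem i hi, hmem j hj]
  · intro i hi
    constructor
    · intro hadj
      rcases hT _ (hmem i hi) hadj with h | h
      · exact .inl (hinj hi (Nat.zero_le _) (h.trans w.getVert_zero.symm))
      · exact .inr (hinj hi (le_refl w.length) (h.trans w.getVert_length.symm))
    · rintro (rfl | rfl)
      · rwa [w.getVert_zero]
      · rwa [w.getVert_length]

theorem IsChordal.adj_of_adj_of_reachable (hG : G.IsChordal) {R : Set V} {u p q a b : V}
    (hR : ∀ t ∈ R, t ≠ u ∧ ¬G.Adj t u) (hpq : p ≠ q) (hp : G.Adj p u) (hq : G.Adj q u)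
    (hpa : G.Adj p a) (hqb : G.Adj q b) (ha : a ∈ R)
    (hab : (G.induceSpanning R).Reachable a b) : G.Adj p q := by
  have hb : b ∈ R := hab.mem_of_induceSpanning ha
  refine hG.adj_of_reachable (T := insert p (insert q R)) hpq hp hq ?_ ?_ ?_
  · rintro (h | h | h)
    · exact hp.ne h.symm
    · exact hq.ne h.symm
    · exact (hR u h).1 rfl
  · rintro t (rfl | rfl | ht) htu
    · exact .inl rfl
    · exact .inr rfl
    · exact absurd htu (hR t ht).2
  · have hmono := induceSpanning_mono (G := G) (T := R) (T' := insert p (insert q R))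
      (by intro t ht; simp [ht])
    refine (Adj.reachable ?_).trans ((hab.mono hmono).trans (Adj.reachable ?_))
    · simp [ha, hpa]
    · simp [hb, hqb.symm]

theorem exists_isSimplicial_mem_of_pairwise_adj_compl {s : Finset V} {C : Set V}
    (hs : ∀ u ∈ s, ∀ x ∈ s, x ≠ u → ¬G.Adj u x →
      ∃ w ∈ s, w ≠ u ∧ ¬G.Adj u w ∧ G.IsSimplicial s w)
    (hC : ∀ p ∈ s, ∀ q ∈ s, p ∉ C → q ∉ C → p ≠ q → G.Adj p q) {x : V} (hx : x ∈ s)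
    (hxC : x ∈ C) : ∃ w ∈ s, w ∈ C ∧ G.IsSimplicial s w := by
  by_cases hcl : ∀ p ∈ s, ∀ q ∈ s, p ≠ q → G.Adj p q
  · exact ⟨x, hx, hxC, fun a ha b hb hab => hcl a ha.1 b hb.1 hab⟩
  push Not at hcl
  obtain ⟨p, hp, q, hq, hpq, hnpq⟩ := hcl
  obtain ⟨w₁, hw₁, hw₁p, hpw₁, hsimp₁⟩ := hs p hp q hq hpq.symm hnpq
  by_cases hw₁C : w₁ ∈ C
  · exact ⟨w₁, hw₁, hw₁C, hsimp₁⟩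
  -- `w₁ ∉ C` is adjacent to all other vertices outside `C`: a simplicial non-neighbour is in `C`.
  obtain ⟨w₂, hw₂, hw₂w₁, hw₁w₂, hsimp₂⟩ := hs w₁ hw₁ p hp hw₁p.symm fun h => hpw₁ h.symm
  refine ⟨w₂, hw₂, ?_, hsimp₂⟩
  by_contra hw₂C
  exact hw₁w₂ (hC w₁ hw₁ w₂ hw₂ hw₁C hw₂C hw₂w₁.symm)

theorem IsChordal.exists_isSimplicial_not_adj (hG : G.IsChordal) (s : Finset V) :
    ∀ u ∈ s, ∀ x ∈ s, x ≠ u → ¬G.Adj u x →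
      ∃ w ∈ s, w ≠ u ∧ ¬G.Adj u w ∧ G.IsSimplicial s w := by
  classical
  induction s using Finset.strongInduction with
  | H s ih =>
  intro u hu x hx hxu hux
  set R : Set V := {t | t ∈ s ∧ t ≠ u ∧ ¬G.Adj t u}
  set C : Set V := {y | (G.induceSpanning R).Reachable x y}
  have hxR : x ∈ R := ⟨hx, hxu, fun h => hux h.symm⟩
  have hCR : C ⊆ R := fun y hy => hy.mem_of_induceSpanning hxR
  set s' := s.filter fun v => v ∈ C ∨ ∃ c ∈ C, G.Adj v c
  have hus' : u ∉ s' := by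
    simp only [s', Finset.mem_filter, not_and, not_or, not_exists]
    exact fun _ => ⟨fun h => (hCR h).2.1 rfl, fun c hc h => (hCR hc).2.2 h.symm⟩
  have hs's : s' ⊂ s := (Finset.ssubset_iff_of_subset (Finset.filter_subset _ _)).2 ⟨u, hu, hus'⟩
  have hsep : ∀ p ∈ s', p ∉ C → G.Adj p u := by
    intro p hp hpC
    obtain ⟨hps, hpC' | ⟨c, hc, hpc⟩⟩ := Finset.mem_filter.1 hp
    · exact absurd hpC' hpC
    by_contra hpu
    have hpR : p ∈ R := ⟨hps, fun h => hus' (h ▸ hp), hpu⟩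
    exact hpC (hc.trans (Adj.reachable (by simp [hpR, hCR hc, hpc.symm])))
  have hS : ∀ p ∈ s', ∀ q ∈ s', p ∉ C → q ∉ C → p ≠ q → G.Adj p q := by
    intro p hp q hq hpC hqC hpq
    obtain ⟨-, hpC' | ⟨a, ha, hpa⟩⟩ := Finset.mem_filter.1 hp
    · exact absurd hpC' hpC
    obtain ⟨-, hqC' | ⟨b, hb, hqb⟩⟩ := Finset.mem_filter.1 hq
    · exact absurd hqC' hqC
    exact hG.adj_of_adj_of_reachable (fun t ht => ht.2) hpq (hsep p hp hpC) (hsep q hq hqC)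
      hpa hqb (hCR ha) (ha.symm.trans hb)
  have hlift : ∀ w ∈ C, G.IsSimplicial s' w → G.IsSimplicial s w := fun w hw hsimp =>
    hsimp.subset <| Set.ofPred_subset_ofPred.2 fun y hy =>
      ⟨Finset.mem_filter.2 ⟨hy.1, .inr ⟨w, hw, hy.2.symm⟩⟩, hy.2⟩
  have hxs' : x ∈ s' := Finset.mem_filter.2 ⟨hx, .inl (Reachable.refl x)⟩
  obtain ⟨w, hws', hwC, hw⟩ :=
    exists_isSimplicial_mem_of_pairwise_adj_compl (ih s' hs's) hS hxs' (Reachable.refl x)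
  exact ⟨w, Finset.filter_subset _ _ hws', (hCR hwC).2.1, fun h => (hCR hwC).2.2 h.symm,
    hlift w hwC hw⟩

theorem IsChordal.exists_isSimplicial (hG : G.IsChordal) {s : Finset V} (hs : s.Nonempty) :
    ∃ v ∈ s, G.IsSimplicial s v := by
  obtain ⟨x, hx⟩ := hs
  obtain ⟨w, hw, -, hsimp⟩ := exists_isSimplicial_mem_of_pairwise_adj_compl
    (hG.exists_isSimplicial_not_adj s) (C := Set.univ) (by simp) hx trivial
  exact ⟨w, hw, hsimp⟩

theorem IsChordal.exists_injOn_isSimplicial (hG : G.IsChordal) (s : Finset V) :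
    ∃ e : V → ℕ, Set.InjOn e s ∧ ∀ v ∈ s, G.IsSimplicial {u | u ∈ s ∧ e v < e u} v := by
  classical
  induction s using Finset.strongInduction with
  | H s ih =>
  rcases s.eq_empty_or_nonempty with rfl | hs
  · exact ⟨fun _ => 0, by simp, by simp⟩
  obtain ⟨v, hv, hsimp⟩ := hG.exists_isSimplicial hs
  obtain ⟨e, he, hpeo⟩ := ih (s.erase v) (Finset.erase_ssubset hv)
  refine ⟨fun x => if x = v then 0 else e x + 1, ?_, fun y hy => ?_⟩
  · intro a ha b hb hab
    by_cases hav : a = v <;> by_cases hbv : b = v <;>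
      simp only [hav, hbv, if_true, if_false, Nat.add_right_cancel_iff] at hab
    · exact hav.trans hbv.symm
    · omega
    · omega
    · exact he (Finset.mem_erase.2 ⟨hav, ha⟩) (Finset.mem_erase.2 ⟨hbv, hb⟩) hab
  by_cases hyv : y = v
  · subst hyv
    exact hsimp.anti fun u hu => hu.1
  refine (hpeo y (Finset.mem_erase.2 ⟨hyv, hy⟩)).anti ?_
  rintro u ⟨hu, hlt⟩
  have huv : u ≠ v := by rintro rfl; simp at hlt
  simp only [hyv, huv, if_false, Nat.add_lt_add_iff_right] at hlt
  exact ⟨Finset.mem_erase.2 ⟨huv, hu⟩, hlt⟩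

end SimpleGraph

/-- Every cluster ⋈ chordal graph is 2-simplicial: if `G1` is chordal and `G2` is a
cluster graph, then `G1 ⊔ G2` admits a vertex ordering such that each closed later
neighborhood can be covered by at most two cliques. -/
theorem clusterChordal_twoSimplicial {V : Type*} [Fintype V]
    (G1 G2 : SimpleGraph V)
    (h1 : ∀ n, 4 ≤ n → ¬ HasInducedCycle G1 n)
    (h2 : ∃ s : Setoid V, ∀ u v : V, G2.Adj u v ↔ (s.r u v ∧ u ≠ v)) :
    ∃ r : LinearOrder V, ∀ v : V, ∃ c : V → Fin 2,
      ∀ u w : V, (u = v ∨ ((G1 ⊔ G2).Adj v u ∧ r.le v u)) →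
        (w = v ∨ ((G1 ⊔ G2).Adj v w ∧ r.le v w)) →
        c u = c w → u ≠ w → (G1 ⊔ G2).Adj u w := by
  classical
  obtain ⟨st, hst⟩ := h2
  obtain ⟨e, he_univ, hpeo⟩ := SimpleGraph.IsChordal.exists_injOn_isSimplicial h1 Finset.univ
  have he : Function.Injective e := fun a b => he_univ (Finset.mem_univ a) (Finset.mem_univ b)
  refine ⟨LinearOrder.lift' e he, fun v => ⟨fun u => if st.r v u then 0 else 1, ?_⟩⟩
  have later : ∀ y, (y = v ∨ (G1 ⊔ G2).Adj v y ∧ e v ≤ e y) → ¬st.r v y →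
      G1.Adj v y ∧ e v < e y := by
    rintro y (rfl | ⟨hadj, hle⟩) hvy
    · exact absurd (st.iseqv.refl _) hvy
    have hG1 : G1.Adj v y := hadj.resolve_right fun h => hvy ((hst v y).1 h).1
    exact ⟨hG1, hle.lt_of_ne fun h => hG1.ne (he h)⟩
  intro u w hu hw hc huw
  by_cases hvu : st.r v u <;> by_cases hvw : st.r v w <;>
    simp only [hvu, hvw, ↓reduceIte, zero_ne_one, one_ne_zero] at hc
  · exact .inr ((hst u w).2 ⟨st.iseqv.trans (st.iseqv.symm hvu) hvw, huw⟩)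
  · obtain ⟨hvu', hlt_u⟩ := later u hu hvu
    obtain ⟨hvw', hlt_w⟩ := later w hw hvw
    exact .inl (hpeo v (Finset.mem_univ v) ⟨⟨Finset.mem_univ u, hlt_u⟩, hvu'⟩
      ⟨⟨Finset.mem_univ w, hlt_w⟩, hvw'⟩ huw)
end

section
/- Every induced subgraph of a cluster ⋈ chordal graph contains a vertex whose open neighborhood can be covered by two cliques. -/
section Aux
variable {V : Type*} {G : SimpleGraph V}

/-- a walk on the set `A` -/
def PathOn (G : SimpleGraph V) (A : Set V) (p : ℕ → V) (k : ℕ) : Prop :=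
  (∀ i ≤ k, p i ∈ A) ∧ ∀ i < k, G.Adj (p i) (p (i+1))

lemma PathOn.concat {A : Set V} {p q : ℕ → V} {k m : ℕ}
    (hp : PathOn G A p k) (hq : PathOn G A q m) (h : p k = q 0) :
    ∃ r, PathOn G A r (k+m) ∧ r 0 = p 0 ∧ r (k+m) = q m := by
  refine ⟨fun i => if i ≤ k then p i else q (i - k), ⟨?_, ?_⟩, by simp, ?_⟩
  · intro i hi
    by_cases hik : i ≤ k
    · simpa [hik] using hp.1 i hik
    · simp only [hik, if_false]
      exact hq.1 _ (by omega)
  · intro i hi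
    by_cases hik : i + 1 ≤ k
    · simpa [hik, (by omega : i ≤ k)] using hp.2 i (by omega)
    · by_cases hik2 : i ≤ k
      · have : i = k := by omega
        subst this
        simp only [le_refl, if_true, hik, if_false]
        by_cases hm : m = 0
        · omega
        · have := hq.2 0 (by omega)
          simpa [h, (by omega : i + 1 - i = 1)] using this
      · simp only [hik2, if_false, hik, if_false]
        have := hq.2 (i - k) (by omega)
        have e : i + 1 - k = (i - k) + 1 := by omega
        rw [e]; exact this
  · by_cases hk : m = 0
    · simp [hk, h.symm]
    · have e : k + m - k = m := by omega
      simp [(by omega : ¬ k + m ≤ k), e]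
      exact fun hm => absurd hm hk

lemma PathOn.reverse {A : Set V} {p : ℕ → V} {k : ℕ} (hp : PathOn G A p k) :
    ∃ r, PathOn G A r k ∧ r 0 = p k ∧ r k = p 0 := by
  refine ⟨fun i => p (k - i), ⟨fun i hi => hp.1 _ (by omega), ?_⟩, by simp, by simp⟩
  intro i hi
  have := (hp.2 (k - i - 1) (by omega)).symm
  have e : k - i - 1 + 1 = k - i := by omega
  rw [e] at this
  simp only []
  have e2 : k - (i+1) = k - i - 1 := by omega
  rw [e2]; exact this


variable {V : Type*} {G : SimpleGraph V}

lemma hasInducedCycle_of (G : SimpleGraph V) (n : ℕ) (hn : 4 ≤ n) (g : ℕ → V)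
    (hginj : ∀ x y, x < y → y < n → g x ≠ g y)
    (hgadj : ∀ x y, x < n → y < n →
      (G.Adj (g x) (g y) ↔ (y = (x+1) % n ∨ x = (y+1) % n))) :
    HasInducedCycle G n := by
  haveI : NeZero n := ⟨by omega⟩
  haveI : Fact (1 < n) := ⟨by omega⟩
  have key : ∀ x y : ZMod n, (y = x + 1) ↔ (y.val = (x.val + 1) % n) := by
    intro x y
    rw [← (ZMod.val_injective n).eq_iff, ZMod.val_add, ZMod.val_one]
  refine ⟨fun i => g i.val, ?_, ?_⟩
  · intro i j hij
    rcases lt_trichotomy i.val j.val with h | h | h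
    · exact absurd hij (hginj _ _ h (ZMod.val_lt j))
    · exact ZMod.val_injective n h
    · exact absurd hij.symm (hginj _ _ h (ZMod.val_lt i))
  · intro i j
    rw [hgadj i.val j.val (ZMod.val_lt i) (ZMod.val_lt j), key i j, key j i]

lemma clique_of_sep (G : SimpleGraph V) (h1 : ∀ n, 4 ≤ n → ¬ HasInducedCycle G n)
    {a u v : V} {B : Set V}
    (huv : u ≠ v) (hau : G.Adj a u) (hav : G.Adj a v)
    (hB : ∀ x ∈ B, ¬ G.Adj a x ∧ x ≠ a)
    (hex : ∃ k : ℕ, ∃ p : ℕ → V, p 0 = u ∧ p k = v ∧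
      (∀ i, 0 < i → i < k → p i ∈ B) ∧ ∀ i < k, G.Adj (p i) (p (i+1))) :
    G.Adj u v := by
  by_contra hne
  classical
  have hspec := Nat.find_spec hex
  have hmin : ∀ m, m < Nat.find hex → ¬ (∃ p : ℕ → V, p 0 = u ∧ p m = v ∧
      (∀ i, 0 < i → i < m → p i ∈ B) ∧ ∀ i < m, G.Adj (p i) (p (i+1))) :=
    fun m hm => Nat.find_min hex hm
  generalize hkg : Nat.find hex = k at hspec hmin
  clear hkg
  obtain ⟨p, hp0, hpk, hpB, hpa⟩ := hspec
  have hk2 : 2 ≤ k := by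
    by_contra hlt
    rcases (by omega : k = 0 ∨ k = 1) with rfl | rfl
    · exact huv (by rw [← hp0, ← hpk])
    · exact hne (by rw [← hp0, ← hpk]; exact hpa 0 (by omega))
  -- injectivity on indices
  have hinj : ∀ i j, i < j → j ≤ k → p i ≠ p j := by
    intro i j hij hjk heq
    apply hmin (k - (j - i)) (by omega)
    set q : ℕ → V := fun m => if m ≤ i then p m else p (m + (j - i)) with hqdef
    have hqle : ∀ m, m ≤ i → q m = p m := fun m hm => by simp [hqdef, hm]
    have hqgt : ∀ m, ¬ m ≤ i → q m = p (m + (j - i)) := fun m hm => by simp [hqdef, hm]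
    refine ⟨q, ?_, ?_, ?_, ?_⟩
    · rw [hqle 0 (by omega), hp0]
    · by_cases hji : j = k
      · have e : k - (j - i) = i := by omega
        rw [e, hqle i le_rfl, heq, hji, hpk]
      · have e : k - (j - i) + (j - i) = k := by omega
        rw [hqgt _ (by omega), e, hpk]
    · intro m hm0 hmk
      by_cases hmi : m ≤ i
      · rw [hqle m hmi]
        exact hpB m hm0 (by omega)
      · rw [hqgt m hmi]
        exact hpB (m + (j - i)) (by omega) (by omega)
    · intro m hm
      by_cases hmi : m + 1 ≤ i
      · rw [hqle m (by omega), hqle (m+1) hmi]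
        exact hpa m (by omega)
      · by_cases hmi2 : m ≤ i
        · have hme : m = i := by omega
          subst hme
          rw [hqle m le_rfl, hqgt (m+1) hmi]
          have e : m + 1 + (j - m) = j + 1 := by omega
          rw [e, heq]
          exact hpa j (by omega)
        · rw [hqgt m hmi2, hqgt (m+1) (by omega)]
          have e : m + 1 + (j - i) = (m + (j - i)) + 1 := by omega
          rw [e]
          exact hpa (m + (j - i)) (by omega)
  -- chord-freeness
  have hchord : ∀ i j, i + 2 ≤ j → j ≤ k → ¬ G.Adj (p i) (p j) := by
    intro i j hij hjk hadj
    apply hmin (k - (j - i - 1)) (by omega)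
    set q : ℕ → V := fun m => if m ≤ i then p m else p (m + (j - i - 1)) with hqdef
    have hqle : ∀ m, m ≤ i → q m = p m := fun m hm => by simp [hqdef, hm]
    have hqgt : ∀ m, ¬ m ≤ i → q m = p (m + (j - i - 1)) := fun m hm => by simp [hqdef, hm]
    refine ⟨q, ?_, ?_, ?_, ?_⟩
    · rw [hqle 0 (by omega), hp0]
    · have e : k - (j - i - 1) + (j - i - 1) = k := by omega
      rw [hqgt _ (by omega), e, hpk]
    · intro m hm0 hmk
      by_cases hmi : m ≤ i
      · rw [hqle m hmi]
        exact hpB m hm0 (by omega)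
      · rw [hqgt m hmi]
        exact hpB (m + (j - i - 1)) (by omega) (by omega)
    · intro m hm
      by_cases hmi : m + 1 ≤ i
      · rw [hqle m (by omega), hqle (m+1) hmi]
        exact hpa m (by omega)
      · by_cases hmi2 : m ≤ i
        · have hme : m = i := by omega
          subst hme
          rw [hqle m le_rfl, hqgt (m+1) hmi]
          have e : m + 1 + (j - m - 1) = j := by omega
          rw [e]
          exact hadj
        · rw [hqgt m hmi2, hqgt (m+1) (by omega)]
          have e : m + 1 + (j - i - 1) = (m + (j - i - 1)) + 1 := by omega
          rw [e]
          exact hpa (m + (j - i - 1)) (by omega)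
  -- characterize adjacency along the path
  have hadjA : ∀ m, m ≤ k → (G.Adj a (p m) ↔ (m = 0 ∨ m = k)) := by
    intro m hm
    constructor
    · intro had
      by_contra hc
      push_neg at hc
      exact (hB _ (hpB m (by omega) (by omega))).1 had
    · rintro (rfl | rfl)
      · rw [hp0]; exact hau
      · rw [hpk]; exact hav
  have hadjB : ∀ m1 m2, m1 ≤ k → m2 ≤ k →
      (G.Adj (p m1) (p m2) ↔ (m2 = m1 + 1 ∨ m1 = m2 + 1)) := by
    intro m1 m2 h1' h2'
    constructor
    · intro had
      by_contra hc
      push_neg at hc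
      rcases lt_trichotomy m1 m2 with h | h | h
      · exact hchord m1 m2 (by omega) h2' had
      · subst h; exact G.loopless.irrefl _ had
      · exact hchord m2 m1 (by omega) h1' had.symm
    · rintro (h | h)
      · subst h; exact hpa m1 (by omega)
      · subst h; exact (hpa m2 (by omega)).symm
  have hpa' : ∀ m, m ≤ k → p m ≠ a := by
    intro m hm
    rcases Nat.eq_zero_or_pos m with rfl | hm0
    · rw [hp0]; exact fun h => G.loopless.irrefl a (h ▸ hau)
    · rcases Nat.lt_or_ge m k with hmk | hmk
      · exact (hB _ (hpB m hm0 hmk)).2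
      · have hme : m = k := by omega
        subst hme
        rw [hpk]; exact fun h => G.loopless.irrefl a (h ▸ hav)
  -- build the cycle
  apply h1 (k + 2) (by omega)
  set g : ℕ → V := fun x => if x = 0 then a else p (x - 1) with hgdef
  have hg0 : g 0 = a := by simp [hgdef]
  have hgpos : ∀ x, ¬ x = 0 → g x = p (x - 1) := by
    intro x hx; simp [hgdef, hx]
  have hmod : ∀ x, x < k + 2 → (x + 1) % (k + 2) = if x + 1 = k + 2 then 0 else x + 1 := by
    intro x hx
    split_ifs with h
    · simp [h]
    · exact Nat.mod_eq_of_lt (by omega)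
  apply hasInducedCycle_of G (k + 2) (by omega) g
  · intro x y hxy hyn
    by_cases hx0 : x = 0
    · subst hx0
      rw [hg0, hgpos y (by omega)]
      exact fun h => hpa' (y - 1) (by omega) h.symm
    · rw [hgpos x hx0, hgpos y (by omega)]
      exact fun h => hinj (x - 1) (y - 1) (by omega) (by omega) h
  · intro x y hx hy
    have hR : (y = (x+1) % (k+2) ∨ x = (y+1) % (k+2)) ↔
        (y = x + 1 ∨ x = y + 1 ∨ (y = 0 ∧ x = k + 1) ∨ (x = 0 ∧ y = k + 1)) := by
      rw [hmod x hx, hmod y hy]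
      split_ifs <;> omega
    rw [hR]
    by_cases hx0 : x = 0 <;> by_cases hy0 : y = 0
    · subst hx0; subst hy0
      rw [hg0]
      constructor
      · intro h; exact absurd h (G.loopless.irrefl a)
      · intro h; omega
    · subst hx0
      rw [hg0, hgpos y hy0, hadjA (y - 1) (by omega)]
      omega
    · subst hy0
      rw [hg0, hgpos x hx0, G.adj_comm, hadjA (x - 1) (by omega)]
      omega
    · rw [hgpos x hx0, hgpos y hy0, hadjB (x - 1) (y - 1) (by omega) (by omega)]
      omega
end Aux

def SimpVx {V : Type*} (G : SimpleGraph V) (W : Set V) (x : V) : Prop :=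
  x ∈ W ∧ ∀ u ∈ W, ∀ w ∈ W, G.Adj x u → G.Adj x w → u ≠ w → G.Adj u w

lemma dirac {V : Type*} [Fintype V] (G : SimpleGraph V)
    (h1 : ∀ n, 4 ≤ n → ¬ HasInducedCycle G n) :
    ∀ (N : ℕ) (W : Set V), W.ncard ≤ N → W.Nonempty →
      (∀ x ∈ W, ∀ y ∈ W, x ≠ y → G.Adj x y) ∨
      ∃ x y, SimpVx G W x ∧ SimpVx G W y ∧ x ≠ y ∧ ¬ G.Adj x y := by
  intro N
  induction N with
  | zero =>
    intro W hcard hne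
    have := (Set.ncard_pos (W.toFinite)).mpr hne
    omega
  | succ N ih =>
    intro W hcard hne
    by_cases hcomp : ∀ x ∈ W, ∀ y ∈ W, x ≠ y → G.Adj x y
    · exact Or.inl hcomp
    right
    push_neg at hcomp
    obtain ⟨a, haW, b, hbW, hab, hnadj⟩ := hcomp
    classical
    set D : Set V := {x | x ∈ W ∧ ¬ G.Adj a x ∧ x ≠ a} with hD
    set Bs : Set V := {x | ∃ k, ∃ p : ℕ → V, PathOn G D p k ∧ p 0 = b ∧ p k = x} with hBs
    have hbD : b ∈ D := ⟨hbW, hnadj, hab.symm⟩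
    have hbB : b ∈ Bs := ⟨0, fun _ => b, ⟨fun i hi => hbD, fun i hi => absurd hi (by omega)⟩, rfl, rfl⟩
    have hBD : Bs ⊆ D := by
      rintro x ⟨k, p, hp, hp0, hpk⟩
      exact hpk ▸ hp.1 k le_rfl
    have hBclosed : ∀ x ∈ Bs, ∀ y ∈ D, G.Adj x y → y ∈ Bs := by
      intro x hx y hyD hxy
      obtain ⟨k, p, hp, hp0, hpk⟩ := hx
      have hq : PathOn G D (fun i => if i = 0 then x else y) 1 := by
        constructor
        · intro i hi
          rcases (by omega : i = 0 ∨ i = 1) with rfl | rfl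
          · simpa using hBD ⟨k, p, hp, hp0, hpk⟩
          · simpa using hyD
        · intro i hi
          have : i = 0 := by omega
          subst this
          simpa using hxy
      obtain ⟨r, hr, hr0, hrk⟩ := hp.concat hq (by rw [hpk]; simp)
      refine ⟨k + 1, r, hr, by rw [hr0, hp0], by rw [hrk]; simp⟩
    have hBpathmem : ∀ (k : ℕ) (p : ℕ → V), PathOn G D p k → p 0 = b → ∀ i ≤ k, p i ∈ Bs := by
      intro k p hp hp0 i hik
      exact ⟨i, p, ⟨fun m hm => hp.1 m (le_trans hm hik), fun m hm => hp.2 m (lt_of_lt_of_le hm hik)⟩, hp0, rfl⟩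
    have hBconn : ∀ x ∈ Bs, ∀ y ∈ Bs, ∃ k, ∃ p : ℕ → V, PathOn G Bs p k ∧ p 0 = x ∧ p k = y := by
      intro x hx y hy
      obtain ⟨k1, p1, hp1, h10, h1k⟩ := hx
      obtain ⟨k2, p2, hp2, h20, h2k⟩ := hy
      have hp1' : PathOn G Bs p1 k1 := ⟨fun i hi => hBpathmem k1 p1 hp1 h10 i hi, hp1.2⟩
      have hp2' : PathOn G Bs p2 k2 := ⟨fun i hi => hBpathmem k2 p2 hp2 h20 i hi, hp2.2⟩
      obtain ⟨r, hr, hr0, hrk⟩ := hp1'.reverse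
      obtain ⟨t, ht, ht0, htk⟩ := hr.concat hp2' (by rw [hrk, h10, h20])
      exact ⟨k1 + k2, t, ht, by rw [ht0, hr0, h1k], by rw [htk, h2k]⟩
    set S : Set V := {x | x ∈ W ∧ G.Adj a x ∧ ∃ y ∈ Bs, G.Adj x y} with hS
    have hSclique : ∀ u ∈ S, ∀ v ∈ S, u ≠ v → G.Adj u v := by
      intro u hu v hv huv
      obtain ⟨huW, hau, yu, hyu, huyu⟩ := hu
      obtain ⟨hvW, hav, yv, hyv, hvyv⟩ := hv
      apply clique_of_sep G h1 huv hau hav (B := Bs)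
        (fun x hx => ⟨(hBD hx).2.1, (hBD hx).2.2⟩)
      obtain ⟨m, q, hq, hq0, hqm⟩ := hBconn yu hyu yv hyv
      set r : ℕ → V := fun i => if i = 0 then u else if i ≤ m + 1 then q (i - 1) else v with hrdef
      have hr0 : r 0 = u := by simp [hrdef]
      have hrmid : ∀ i, ¬ i = 0 → i ≤ m + 1 → r i = q (i - 1) := by
        intro i hi1 hi2
        simp [hrdef, hi1, hi2]
      have hrlast : r (m + 2) = v := by
        rw [hrdef]
        simp only []
        rw [if_neg (by omega), if_neg (by omega)]
      refine ⟨m + 2, r, hr0, hrlast, ?_, ?_⟩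
      · intro i hi0 him
        rw [hrmid i (by omega) (by omega)]
        exact hq.1 (i - 1) (by omega)
      · intro i hi
        by_cases hi0 : i = 0
        · subst hi0
          rw [hr0, hrmid 1 (by omega) (by omega), (by omega : 1 - 1 = 0), hq0]
          exact huyu
        · by_cases him : i ≤ m
          · rw [hrmid i hi0 (by omega), hrmid (i+1) (by omega) (by omega),
              (by omega : i + 1 - 1 = i)]
            have h := hq.2 (i-1) (by omega)
            rw [(by omega : i - 1 + 1 = i)] at h
            exact h
          · have : i = m + 1 := by omega
            subst this
            rw [hrmid (m+1) (by omega) (by omega), (by omega : m + 1 + 1 = m + 2), hrlast,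
              (by omega : m + 1 - 1 = m), hqm]
            exact hvyv.symm
    have haB : a ∉ Bs := fun h => (hBD h).2.2 rfl
    have haS : a ∉ S := fun h => G.loopless.irrefl a h.2.1
    have hBW : Bs ⊆ W := fun x hx => (hBD hx).1
    have hSW : S ⊆ W := fun x hx => hx.1
    have hnbr : ∀ x ∈ Bs, ∀ y ∈ W, G.Adj x y → y ∈ Bs ∪ S := by
      intro x hx y hyW hxy
      by_cases hya : y = a
      · subst hya
        exact absurd hxy.symm (hBD hx).2.1
      · by_cases hyadj : G.Adj a y
        · exact Set.mem_union_right _ ⟨hyW, hyadj, x, hx, hxy.symm⟩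
        · exact Set.mem_union_left _ (hBclosed x hx y ⟨hyW, hyadj, hya⟩ hxy)
    have hW1ss : Bs ∪ S ⊂ W := by
      rw [Set.ssubset_iff_subset_ne]
      refine ⟨Set.union_subset hBW hSW, fun h => ?_⟩
      rcases (h ▸ haW : a ∈ Bs ∪ S) with h' | h'
      · exact haB h'
      · exact haS h'
    have hc1 : (Bs ∪ S).ncard ≤ N := by
      have := Set.ncard_lt_ncard hW1ss (Set.toFinite W)
      omega
    have hxex : ∃ x, x ∈ Bs ∧ SimpVx G W x := by
      rcases ih (Bs ∪ S) hc1 ⟨b, Set.mem_union_left _ hbB⟩ with hc | ⟨x1, x2, hx1, hx2, hx12, hna12⟩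
      · refine ⟨b, hbB, hbW, ?_⟩
        intro u huW w hwW hbu hbw huw
        exact hc u (hnbr b hbB u huW hbu) w (hnbr b hbB w hwW hbw) huw
      · have hone : x1 ∈ Bs ∨ x2 ∈ Bs := by
          by_contra hcon
          push_neg at hcon
          have h1' : x1 ∈ S := by
            rcases hx1.1 with h | h
            · exact absurd h hcon.1
            · exact h
          have h2' : x2 ∈ S := by
            rcases hx2.1 with h | h
            · exact absurd h hcon.2
            · exact h
          exact hna12 (hSclique x1 h1' x2 h2' hx12)
        have key : ∀ x, x ∈ Bs → SimpVx G (Bs ∪ S) x → SimpVx G W x := by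
          intro x hx hsimp
          refine ⟨hBW hx, ?_⟩
          intro u huW w hwW hu hw huw
          exact hsimp.2 u (hnbr x hx u huW hu) w (hnbr x hx w hwW hw) hu hw huw
        rcases hone with h | h
        · exact ⟨x1, h, key x1 h hx1⟩
        · exact ⟨x2, h, key x2 h hx2⟩
    obtain ⟨x, hxB, hxSimp⟩ := hxex
    have hW2ss : W \ Bs ⊂ W := by
      rw [Set.ssubset_iff_subset_ne]
      refine ⟨Set.diff_subset, fun h => ?_⟩
      have hb2 : b ∈ W \ Bs := h.symm ▸ hbW
      exact hb2.2 hbB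
    have hc2 : (W \ Bs).ncard ≤ N := by
      have := Set.ncard_lt_ncard hW2ss (Set.toFinite W)
      omega
    have haW2 : a ∈ W \ Bs := ⟨haW, haB⟩
    have hyex : ∃ y, y ∈ W \ Bs ∧ y ∉ S ∧ SimpVx G W y := by
      have key : ∀ y, y ∈ W \ Bs → y ∉ S → SimpVx G (W \ Bs) y → SimpVx G W y := by
        intro y hyWB hyS hsimp
        refine ⟨hyWB.1, ?_⟩
        intro u huW w hwW hyu hyw huw
        have hu2 : u ∈ W \ Bs := by
          refine ⟨huW, fun huB => ?_⟩
          rcases hnbr u huB y hyWB.1 hyu.symm with h | h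
          · exact hyWB.2 h
          · exact hyS h
        have hw2 : w ∈ W \ Bs := by
          refine ⟨hwW, fun hwB => ?_⟩
          rcases hnbr w hwB y hyWB.1 hyw.symm with h | h
          · exact hyWB.2 h
          · exact hyS h
        exact hsimp.2 u hu2 w hw2 hyu hyw huw
      rcases ih (W \ Bs) hc2 ⟨a, haW2⟩ with hc | ⟨y1, y2, hy1, hy2, hy12, hna12⟩
      · refine ⟨a, haW2, haS, haW, ?_⟩
        intro u huW w hwW hau' haw' huw
        have huB : u ∉ Bs := fun h => (hBD h).2.1 hau'
        have hwB : w ∉ Bs := fun h => (hBD h).2.1 haw'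
        exact hc u ⟨huW, huB⟩ w ⟨hwW, hwB⟩ huw
      · have hone : y1 ∉ S ∨ y2 ∉ S := by
          by_contra hcon
          push_neg at hcon
          exact hna12 (hSclique _ hcon.1 _ hcon.2 hy12)
        rcases hone with h | h
        · exact ⟨y1, hy1.1, h, key y1 hy1.1 h hy1⟩
        · exact ⟨y2, hy2.1, h, key y2 hy2.1 h hy2⟩
    obtain ⟨y, hyWB, hyS, hySimp⟩ := hyex
    refine ⟨x, y, hxSimp, hySimp, fun h => hyWB.2 (h ▸ hxB), fun hadj => ?_⟩
    rcases hnbr x hxB y hyWB.1 hadj with h | h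
    · exact hyWB.2 h
    · exact hyS h

/-- Every (nonempty) induced subgraph of a cluster ⋈ chordal graph contains a vertex
whose open neighborhood (within the subgraph) can be covered by two cliques. -/
theorem clusterChordal_inducedSubgraph_vertex {V : Type*} [Fintype V]
    (G1 G2 : SimpleGraph V)
    (h1 : ∀ n, 4 ≤ n → ¬ HasInducedCycle G1 n)
    (h2 : ∃ s : Setoid V, ∀ u v : V, G2.Adj u v ↔ (s.r u v ∧ u ≠ v))
    (W : Set V) (hW : W.Nonempty) :
    ∃ v ∈ W, ∃ c : V → Fin 2,
      ∀ u ∈ W, ∀ w ∈ W, (G1 ⊔ G2).Adj v u → (G1 ⊔ G2).Adj v w →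
        c u = c w → u ≠ w → (G1 ⊔ G2).Adj u w := by
  classical
  have hsimp : ∃ v, SimpVx G1 W v := by
    rcases dirac G1 h1 W.ncard W le_rfl hW with hc | ⟨x, _, hx, _, _, _⟩
    · exact ⟨hW.some, hW.some_mem, fun u hu w hw _ _ huw => hc u hu w hw huw⟩
    · exact ⟨x, hx⟩
  obtain ⟨v, hvW, hv⟩ := hsimp
  obtain ⟨s, hs⟩ := h2
  refine ⟨v, hvW, fun u => if G1.Adj v u then 0 else 1, ?_⟩
  intro u hu w hw hvu hvw hcw hne
  by_cases hau : G1.Adj v u <;> by_cases haw : G1.Adj v w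
  · exact (SimpleGraph.sup_adj G1 G2 _ _).mpr (Or.inl (hv u hu w hw hau haw hne))
  · simp [hau, haw] at hcw
  · simp [hau, haw] at hcw
  · have h2u : G2.Adj v u := by
      rcases (SimpleGraph.sup_adj G1 G2 _ _).mp hvu with h | h
      · exact absurd h hau
      · exact h
    have h2w : G2.Adj v w := by
      rcases (SimpleGraph.sup_adj G1 G2 _ _).mp hvw with h | h
      · exact absurd h haw
      · exact h
    have r1 : s.r v u := ((hs v u).mp h2u).1
    have r2 : s.r v w := ((hs v w).mp h2w).1
    have : s.r u w := s.iseqv.trans (s.iseqv.symm r1) r2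
    exact (SimpleGraph.sup_adj G1 G2 _ _).mpr (Or.inr ((hs u w).mpr ⟨this, hne⟩))
end

section
/- The complete bipartite graph K_{2,4} is not a cluster ⋈ chordal graph: there is no way to write the edge set of K_{2,4} as E1 ∪ E2 where (V,E1) is chordal and (V,E2) is a cluster graph on the 6 vertices of K_{2,4}. -/
/-- The complete bipartite graph K_{2,4}. -/
def K24 : SimpleGraph (Fin 2 ⊕ Fin 4) where
  Adj a b := a.isLeft ≠ b.isLeft
  symm := ⟨fun _ _ h => Ne.symm h⟩
  loopless := ⟨fun _ h => h rfl⟩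

/-! In a cluster graph the neighbours of a vertex are pairwise adjacent, so a cluster subgraph
of a complete bipartite graph gives every vertex at most one neighbour. Two left vertices `x, x'`
therefore have at most two cluster neighbours on the right, and for two further right vertices
`r, r'` all four edges lie in the other graph, where `x r x' r'` is an induced 4-cycle. -/

open Finset

variable {V α β : Type*}

theorem hasInducedCycle_four_of_adj {G : SimpleGraph V} {a b c d : V}
    (hab : G.Adj a b) (hbc : G.Adj b c) (hcd : G.Adj c d) (hda : G.Adj d a)
    (hac : a ≠ c) (hbd : b ≠ d) (hac' : ¬ G.Adj a c) (hbd' : ¬ G.Adj b d) :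
    HasInducedCycle G 4 := by
  refine ⟨![a, b, c, d], ?_, ?_⟩
  · show Function.Injective ![a, b, c, d]
    intro i j h
    fin_cases i <;> fin_cases j <;>
      simp_all [hab.ne, hbc.ne, hcd.ne, hda.ne, hab.ne.symm, hbc.ne.symm, hcd.ne.symm,
        hda.ne.symm, hac.symm, hbd.symm]
  · -- `ZMod 4` unfolds to `Fin 4`; stated there, the numerals left by `fin_cases` reduce under `simp`.
    show ∀ i j : Fin 4, G.Adj (![a, b, c, d] i) (![a, b, c, d] j) ↔ (j = i + 1 ∨ i = j + 1)
    intro i j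
    fin_cases i <;> fin_cases j <;>
      simp [hab, hbc, hcd, hda, hab.symm, hbc.symm, hcd.symm, hda.symm, hac', hbd',
        G.adj_comm c a, G.adj_comm d b]

def IsClusterGraph (G : SimpleGraph V) : Prop :=
  ∃ s : Setoid V, ∀ u v, G.Adj u v ↔ s u v ∧ u ≠ v

theorem IsClusterGraph.adj_of_adj_of_adj {G : SimpleGraph V} (hG : IsClusterGraph G)
    {u v w : V} (huv : G.Adj u v) (huw : G.Adj u w) (hvw : v ≠ w) : G.Adj v w := by
  obtain ⟨s, hs⟩ := hG
  exact (hs v w).2 ⟨s.trans' (s.symm ((hs u v).1 huv).1) ((hs u w).1 huw).1, hvw⟩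

theorem IsClusterGraph.eq_of_adj_inl_inr {G : SimpleGraph (α ⊕ β)} (hG : IsClusterGraph G)
    (hle : G ≤ completeBipartiteGraph α β) {x : α} {r r' : β}
    (hr : G.Adj (.inl x) (.inr r)) (hr' : G.Adj (.inl x) (.inr r')) : r = r' := by
  by_contra hne
  simpa using hle (hG.adj_of_adj_of_adj hr hr' (by simpa using hne))

theorem IsClusterGraph.exists_ne_not_adj_inl_inr [Fintype β] {G : SimpleGraph (α ⊕ β)}
    (hG : IsClusterGraph G) (hle : G ≤ completeBipartiteGraph α β) (hβ : 4 ≤ Fintype.card β)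
    (x x' : α) : ∃ r r' : β, r ≠ r' ∧
      ∀ y ∈ ({x, x'} : Set α), ∀ s ∈ ({r, r'} : Set β), ¬ G.Adj (.inl y) (.inr s) := by
  classical
  let N : α → Finset β := fun y => {s | G.Adj (.inl y) (.inr s)}
  have hN : ∀ y, #(N y) ≤ 1 := fun y => card_le_one.2 fun s hs s' hs' =>
    hG.eq_of_adj_inl_inr hle (by simpa [N] using hs) (by simpa [N] using hs')
  have hcompl : 1 < #(N x ∪ N x')ᶜ := by
    have := card_union_le (N x) (N x')
    rw [card_compl]
    have := hN x
    have := hN x'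
    omega
  obtain ⟨r, hr, r', hr', hne⟩ := one_lt_card.1 hcompl
  refine ⟨r, r', hne, ?_⟩
  simp_all [N]

theorem hasInducedCycle_four_of_sup_eq_completeBipartiteGraph [Nontrivial α] [Fintype β]
    (hβ : 4 ≤ Fintype.card β) {G₁ G₂ : SimpleGraph (α ⊕ β)} (hG₂ : IsClusterGraph G₂)
    (h : G₁ ⊔ G₂ = completeBipartiteGraph α β) : HasInducedCycle G₁ 4 := by
  obtain ⟨x, x', hx⟩ := exists_pair_ne α
  have hle₁ : G₁ ≤ completeBipartiteGraph α β := h ▸ le_sup_left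
  obtain ⟨r, r', hr, hG₂⟩ := hG₂.exists_ne_not_adj_inl_inr (h ▸ le_sup_right) hβ x x'
  have hG₁ : ∀ y ∈ ({x, x'} : Set α), ∀ s ∈ ({r, r'} : Set β), G₁.Adj (.inl y) (.inr s) := by
    intro y hy s hs
    have hK : (G₁ ⊔ G₂).Adj (.inl y) (.inr s) := by simp [h]
    exact ((SimpleGraph.sup_adj ..).1 hK).resolve_right (hG₂ y hy s hs)
  exact hasInducedCycle_four_of_adj (hG₁ x (by simp) r (by simp))
    (hG₁ x' (by simp) r (by simp)).symm (hG₁ x' (by simp) r' (by simp))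
    (hG₁ x (by simp) r' (by simp)).symm (by simpa using hx) (by simpa using hr)
    (fun h => by simpa using hle₁ h) (fun h => by simpa using hle₁ h)

theorem K24_eq_completeBipartiteGraph : K24 = completeBipartiteGraph (Fin 2) (Fin 4) := by
  ext (a | a) (b | b) <;> simp [K24]

/-- K_{2,4} is not a cluster ⋈ chordal graph: its edge set cannot be written as the
union of a chordal graph and a cluster graph on its six vertices. -/
theorem K24_not_clusterChordal :
    ¬ ∃ G1 G2 : SimpleGraph (Fin 2 ⊕ Fin 4),
      (∀ n, 4 ≤ n → ¬ HasInducedCycle G1 n) ∧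
      (∃ s : Setoid (Fin 2 ⊕ Fin 4), ∀ u v, G2.Adj u v ↔ (s.r u v ∧ u ≠ v)) ∧
      G1 ⊔ G2 = K24 := by
  rintro ⟨G1, G2, hchordal, hcluster, hunion⟩
  rw [K24_eq_completeBipartiteGraph] at hunion
  exact hchordal 4 le_rfl
    (hasInducedCycle_four_of_sup_eq_completeBipartiteGraph (by simp) hcluster hunion)
end

section
/- Let G be a triangle-free cubic graph and v a vertex such that for some edge e = {v,w} incident to v, the graph G' = (V, E∖{e}) is a cluster ⋈ chordal graph. Then G contains a Hamiltonian cycle. (Specifically, the chordal part must be a Hamiltonian path from v to w, which together with e closes into a Hamiltonian cycle.) -/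
theorem ZMod.val_add_one {n : ℕ} [NeZero n] (a : ZMod n) : (a + 1).val = (a.val + 1) % n := by
  rw [val_add, val_one_eq_one_mod, Nat.add_mod_mod]

namespace SimpleGraph

variable {V : Type*} {G : SimpleGraph V} {u v : V}

namespace Walk

lemma IsPath.injective_getVert_val {p : G.Walk u v} (hp : p.IsPath) :
    Function.Injective fun i : ZMod (p.length + 1) => p.getVert i.val := fun i j hij =>
  ZMod.val_injective _ <| hp.getVert_injOn (Nat.lt_succ_iff.mp i.val_lt)
    (Nat.lt_succ_iff.mp j.val_lt) hij

lemma adj_getVert_val_add_one (p : G.Walk u v) (hvu : G.Adj v u) (i : ZMod (p.length + 1)) :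
    G.Adj (p.getVert i.val) (p.getVert (i + 1).val) := by
  have hi := i.val_lt
  rw [ZMod.val_add_one]
  rcases (Nat.lt_succ_iff.mp hi).lt_or_eq with hlt | heq
  · rw [Nat.mod_eq_of_lt (by omega)]
    exact p.adj_getVert_succ hlt
  · rw [heq, Nat.mod_self, getVert_zero, getVert_length]
    exact hvu

-- A chord would close a cycle of length less than `p.length + 1`.
lemma IsPath.eq_add_one_of_adj_getVert {p : G.Walk u v} (hp : p.IsPath)
    (hmin : ∀ a (c : G.Walk a a), c.IsCycle → p.length + 1 ≤ c.length) {i j : ℕ} (hij : i < j)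
    (hj : j ≤ p.length) (hadj : G.Adj (p.getVert i) (p.getVert j)) :
    j = i + 1 ∨ i = 0 ∧ j = p.length := by
  by_contra! hchord
  let q : G.Walk (p.getVert i) (p.getVert j) :=
    ((p.drop i).take (j - i)).copy rfl (by rw [drop_getVert]; congr 1; omega)
  have hq : q.IsPath := by simpa [q] using (hp.drop i).take (j - i)
  have hq_snd : q.snd = p.getVert (i + 1) := by
    simp only [q, snd, getVert_copy, take_getVert, drop_getVert]
    congr 1; omega
  have hcycle : (cons hadj.symm q).IsCycle := by
    refine (cons_isCycle_iff _ _).mpr ⟨hq, fun he => hchord.1 ?_⟩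
    exact hp.getVert_injOn hj (show i + 1 ≤ p.length by omega)
      ((hq.eq_snd_of_mem_edges (Sym2.eq_swap ▸ he)).trans hq_snd)
  have := hmin _ _ hcycle
  simp only [length_cons, q, length_copy, take_length, drop_length] at this
  omega

lemma IsPath.hasInducedCycle {p : G.Walk u v} (hp : p.IsPath) (hvu : G.Adj v u)
    (hmin : ∀ a (c : G.Walk a a), c.IsCycle → p.length + 1 ≤ c.length) :
    HasInducedCycle G (p.length + 1) := by
  have hsucc (i j : ZMod (p.length + 1)) : j = i + 1 ↔ j.val = (i.val + 1) % (p.length + 1) := by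
    rw [← ZMod.val_add_one, ZMod.val_injective _ |>.eq_iff]
  have hchord {i j : ZMod (p.length + 1)} (hij : i.val < j.val)
      (hadj : G.Adj (p.getVert i.val) (p.getVert j.val)) : j = i + 1 ∨ i = j + 1 := by
    have hj := j.val_lt
    rw [hsucc, hsucc]
    rcases hp.eq_add_one_of_adj_getVert hmin hij (by omega) hadj with h | ⟨hi, hj'⟩
    · left; rw [Nat.mod_eq_of_lt (by omega)]; exact h
    · right; rw [hj', Nat.mod_self]; exact hi
  refine ⟨_, hp.injective_getVert_val, fun i j => ⟨fun hadj => ?_, ?_⟩⟩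
  · rcases lt_trichotomy i.val j.val with hlt | heq | hgt
    · exact hchord hlt hadj
    · exact absurd (heq ▸ hadj) G.irrefl
    · exact (hchord hgt hadj.symm).symm
  · rintro (rfl | rfl)
    · exact p.adj_getVert_val_add_one hvu i
    · exact (p.adj_getVert_val_add_one hvu j).symm

end Walk

lemma exists_hasInducedCycle_of_not_isAcyclic (hG : ¬ G.IsAcyclic) :
    ∃ n, 3 ≤ n ∧ HasInducedCycle G n := by
  obtain ⟨a, c, hc, hgirth⟩ := exists_girth_eq_length.mpr hG
  have hlen := c.length_tail_add_one hc.not_nil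
  refine ⟨c.tail.length + 1, hlen ▸ hc.three_le_length, hc.isPath_tail.hasInducedCycle
    (c.adj_snd hc.not_nil) fun b d hd => ?_⟩
  rw [hlen, ← hgirth]
  exact girth_le_length hd

lemma _root_.HasInducedCycle.not_cliqueFree_three (h : HasInducedCycle G 3) :
    ¬ G.CliqueFree 3 := by
  classical
  obtain ⟨f, -, hf⟩ := h
  exact fun hfree => hfree {f 0, f 1, f 2} <| is3Clique_triple_iff.mpr
    ⟨(hf 0 1).mpr (by decide), (hf 0 2).mpr (by decide), (hf 1 2).mpr (by decide)⟩

lemma isAcyclic_of_cliqueFree_three_of_forall_not_hasInducedCycle (h3 : G.CliqueFree 3)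
    (hchordal : ∀ n, 4 ≤ n → ¬ HasInducedCycle G n) : G.IsAcyclic := by
  by_contra hG
  obtain ⟨n, hn, hcycle⟩ := exists_hasInducedCycle_of_not_isAcyclic hG
  rcases hn.eq_or_lt with rfl | hn
  · exact hcycle.not_cliqueFree_three h3
  · exact hchordal n hn hcycle

lemma IsAcyclic.exists_isTree_le [Nonempty V] (hG : G.IsAcyclic) : ∃ T, G ≤ T ∧ T.IsTree :=
  let ⟨T, hGT, _, hT⟩ := connected_top.exists_isTree_le_of_le_of_isAcyclic le_top hG
  ⟨T, hGT, hT⟩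

section Finite

variable [Fintype V]

lemma ncard_neighborSet_eq_degree [DecidableRel G.Adj] (x : V) :
    (G.neighborSet x).ncard = G.degree x := by
  rw [Set.ncard_eq_toFinset_card', ← neighborFinset_def, card_neighborFinset_eq_degree]

namespace Walk

lemma ncard_neighborSet_toSubgraph_lt_degree [DecidableRel G.Adj] (p : G.Walk u v) {x y : V}
    (hxy : G.Adj x y) (hy : y ∉ p.support) :
    (p.toSubgraph.neighborSet x).ncard < G.degree x := by
  rw [← ncard_neighborSet_eq_degree]
  refine Set.ncard_lt_ncard ⟨p.toSubgraph.neighborSet_subset x, fun h => hy ?_⟩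
    (Set.toFinite _)
  exact mem_support_of_adj_toSubgraph (h hxy).symm

lemma IsPath.mem_support_of_adj [DecidableRel G.Adj] {p : G.Walk u v} (hp : p.IsPath)
    (huv : u ≠ v) (hu : G.degree u ≤ 1) (hv : G.degree v ≤ 1)
    (hdeg : ∀ x, x ≠ u → x ≠ v → G.degree x ≤ 2) {x y : V} (hx : x ∈ p.support)
    (hxy : G.Adj x y) : y ∈ p.support := by
  by_contra hy
  have hlt := p.ncard_neighborSet_toSubgraph_lt_degree hxy hy
  have hnil : ¬ p.Nil := not_nil_of_ne huv
  obtain ⟨i, rfl, hi⟩ := mem_support_iff_exists_getVert.mp hx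
  rcases Nat.eq_zero_or_pos i with rfl | hi0
  · rw [getVert_zero, hp.neighborSet_toSubgraph_startpoint hnil, Set.ncard_singleton] at hlt
    omega
  rcases hi.eq_or_lt with rfl | hilt
  · rw [getVert_length, hp.neighborSet_toSubgraph_endpoint hnil, Set.ncard_singleton] at hlt
    omega
  rw [hp.ncard_neighborSet_toSubgraph_internal_eq_two hi0.ne' hilt] at hlt
  have := hdeg _ (mt (hp.getVert_eq_start_iff hi).mp hi0.ne')
    (mt (hp.getVert_eq_end_iff hi).mp hilt.ne)
  omega

lemma IsPath.isHamiltonian_of_degree_le [DecidableEq V] [DecidableRel G.Adj] {p : G.Walk u v}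
    (hp : p.IsPath) (hG : G.Connected) (huv : u ≠ v) (hu : G.degree u ≤ 1)
    (hv : G.degree v ≤ 1) (hdeg : ∀ x, x ≠ u → x ≠ v → G.degree x ≤ 2) : p.IsHamiltonian := by
  refine hp.isHamiltonian_of_mem fun y => by_contra fun hy => ?_
  obtain ⟨q⟩ := hG.preconnected u y
  obtain ⟨d, -, hd, hd'⟩ := q.exists_boundary_dart {x | x ∈ p.support} p.start_mem_support hy
  exact hd' (hp.mem_support_of_adj huv hu hv hdeg hd d.adj)

lemma IsHamiltonian.exists_zmod_equiv [DecidableEq V] {p : G.Walk u v} (hp : p.IsHamiltonian)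
    (hvu : G.Adj v u) :
    ∃ c : ZMod (Fintype.card V) ≃ V, ∀ i, G.Adj (c i) (c (i + 1)) := by
  have hcard : p.length + 1 = Fintype.card V := by
    have := hp.length_eq
    have := Fintype.card_pos_iff.mpr ⟨u⟩
    omega
  rw [← hcard]
  exact ⟨Equiv.ofBijective _ ((Fintype.bijective_iff_injective_and_card _).mpr
    ⟨hp.isPath.injective_getVert_val, by simpa⟩), p.adj_getVert_val_add_one hvu⟩

end Walk

open Finset in
lemma IsAcyclic.isTree_and_degree_eq_of_sum_le [Nonempty V] [DecidableRel G.Adj]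
    (hG : G.IsAcyclic) {b : V → ℕ} (hb : ∀ x, b x ≤ G.degree x)
    (hsum : 2 * (Fintype.card V - 1) ≤ ∑ x, b x) : G.IsTree ∧ ∀ x, G.degree x = b x := by
  classical
  obtain ⟨T, hGT, hT⟩ := hG.exists_isTree_le
  have hcard_T := hT.card_edgeFinset
  have hcard_le : #G.edgeFinset ≤ #T.edgeFinset := card_le_card (edgeFinset_mono hGT)
  have hdegrees := G.sum_degrees_eq_twice_card_edges
  have hbG : ∑ x, b x ≤ ∑ x, G.degree x := sum_le_sum fun x _ => hb x
  refine ⟨?_, fun x => ((sum_eq_sum_iff_of_le fun x _ => hb x).mp (by omega) x (mem_univ x)).symm⟩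
  have hGT_eq : G = T :=
    edgeFinset_inj.mp (eq_of_subset_of_card_le (edgeFinset_mono hGT) (by omega))
  exact hGT_eq ▸ hT

lemma degree_le_one_of_cliqueFree_three_of_adj_iff_rel [DecidableRel G.Adj]
    (h3 : G.CliqueFree 3) (s : Setoid V) (hs : ∀ a b, G.Adj a b ↔ s.r a b ∧ a ≠ b) (x : V) :
    G.degree x ≤ 1 := by
  classical
  rw [← card_neighborFinset_eq_degree, Finset.card_le_one]
  intro a ha b hb
  by_contra hab
  rw [mem_neighborFinset] at ha hb
  exact h3 {x, a, b} <| is3Clique_triple_iff.mpr ⟨ha, hb,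
    (hs a b).mpr ⟨s.iseqv.trans (s.iseqv.symm ((hs x a).mp ha).1) ((hs x b).mp hb).1, hab⟩⟩

lemma degree_le_add_of_le_sup {H G₁ G₂ : SimpleGraph V} [DecidableRel H.Adj]
    [DecidableRel G₁.Adj] [DecidableRel G₂.Adj] (h : H ≤ G₁ ⊔ G₂) (x : V) :
    H.degree x ≤ G₁.degree x + G₂.degree x := by
  classical
  simp only [← card_neighborFinset_eq_degree]
  refine (Finset.card_le_card fun y hy => ?_).trans (Finset.card_union_le _ _)
  simpa using h ((mem_neighborFinset _ _ _).mp hy)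

section DeleteEdge

variable [DecidableEq V] [DecidableRel G.Adj] {w : V}

lemma degree_deleteEdges_add_one (h : G.Adj v w) :
    (G.deleteEdges {s(v, w)}).degree v + 1 = G.degree v := by
  have : (G.deleteEdges {s(v, w)}).neighborFinset v = (G.neighborFinset v).erase w := by
    ext y; simp [h.ne, and_comm]
  rw [← card_neighborFinset_eq_degree, ← card_neighborFinset_eq_degree, this,
    Finset.card_erase_add_one ((mem_neighborFinset _ _ _).mpr h)]

lemma degree_deleteEdges_add_one_right (h : G.Adj v w) :
    (G.deleteEdges {s(v, w)}).degree w + 1 = G.degree w := by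
  rw [Sym2.eq_swap]
  exact degree_deleteEdges_add_one h.symm

lemma degree_deleteEdges_of_ne {x : V} (hv : x ≠ v) (hw : x ≠ w) :
    (G.deleteEdges {s(v, w)}).degree x = G.degree x := by
  have : (G.deleteEdges {s(v, w)}).neighborFinset x = G.neighborFinset x := by
    ext y; simp [hv, hw]
  rw [← card_neighborFinset_eq_degree, ← card_neighborFinset_eq_degree, this]

lemma sum_degrees_deleteEdges_add_two (h : G.Adj v w) :
    ∑ x, (G.deleteEdges {s(v, w)}).degree x + 2 = ∑ x, G.degree x := by
  have : (G.deleteEdges {s(v, w)}).edgeFinset = G.edgeFinset.erase s(v, w) := by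
    ext e; simp [and_comm]
  rw [sum_degrees_eq_twice_card_edges, sum_degrees_eq_twice_card_edges, this,
    ← Finset.card_erase_add_one (a := s(v, w)) (mem_edgeFinset.mpr h)]
  ring

lemma IsRegularOfDegree.two_mul_card_sub_one_le_sum_degree_deleteEdges_sub_one
    (hG : G.IsRegularOfDegree 3) (h : G.Adj v w) :
    2 * (Fintype.card V - 1) ≤ ∑ x, ((G.deleteEdges {s(v, w)}).degree x - 1) := by
  have hsum_H := sum_degrees_deleteEdges_add_two h
  have hsum_G : ∑ x, G.degree x = 3 * Fintype.card V := by simp [hG.degree_eq, mul_comm]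
  have : ∑ x, (G.deleteEdges {s(v, w)}).degree x ≤
      ∑ x, ((G.deleteEdges {s(v, w)}).degree x - 1 + 1) :=
    Finset.sum_le_sum fun x _ => le_tsub_add
  rw [Finset.sum_add_distrib, Finset.sum_const, Finset.card_univ, smul_eq_mul, mul_one] at this
  omega

end DeleteEdge

end Finite

end SimpleGraph

open SimpleGraph in
theorem clusterChordal_implies_hamiltonian_general {V : Type*} [Fintype V]
    (G : SimpleGraph V) [DecidableRel G.Adj]
    (htf : G.CliqueFree 3) (hcubic : ∀ v : V, G.degree v = 3)
    (v w : V) (hvw : G.Adj v w)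
    (G1 G2 : SimpleGraph V)
    (hcluster : ∃ s : Setoid V, ∀ a b : V, G1.Adj a b ↔ (s.r a b ∧ a ≠ b))
    (hchordal : ∀ n, 4 ≤ n → ¬ HasInducedCycle G2 n)
    (hunion : G1 ⊔ G2 = G.deleteEdges {s(v, w)}) :
    ∃ c : ZMod (Fintype.card V) ≃ V,
      ∀ i : ZMod (Fintype.card V), G.Adj (c i) (c (i + 1)) := by
  classical
  obtain ⟨s, hs⟩ := hcluster
  have hle : G1 ⊔ G2 ≤ G := hunion ▸ G.deleteEdges_le _
  have hG2 : G2 ≤ G := le_sup_right.trans hle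
  have hmatching :=
    degree_le_one_of_cliqueFree_three_of_adj_iff_rel (htf.anti (le_sup_left.trans hle)) s hs
  have hforest :=
    isAcyclic_of_cliqueFree_three_of_forall_not_hasInducedCycle (htf.anti hG2) hchordal
  have : Nonempty V := ⟨v⟩
  obtain ⟨htree, hdeg⟩ := hforest.isTree_and_degree_eq_of_sum_le
    (fun x => by have := degree_le_add_of_le_sup hunion.ge x; have := hmatching x; omega)
    (IsRegularOfDegree.two_mul_card_sub_one_le_sum_degree_deleteEdges_sub_one hcubic hvw)
  have hdeg_v := degree_deleteEdges_add_one hvw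
  have hdeg_w := degree_deleteEdges_add_one_right hvw
  obtain ⟨p, hp⟩ := (htree.connected.preconnected v w).exists_isPath
  have hham := hp.isHamiltonian_of_degree_le htree.connected hvw.ne
    (by rw [hdeg]; have := hcubic v; omega) (by rw [hdeg]; have := hcubic w; omega)
    fun x hv hw => by rw [hdeg, degree_deleteEdges_of_ne hv hw, hcubic]
  exact (hham.map (Hom.ofLE hG2) Function.bijective_id).exists_zmod_equiv hvw.symm

/-- If `G` is a triangle-free cubic graph and deleting some edge `{v,w}` yields a
cluster ⋈ chordal graph, then `G` contains a Hamiltonian cycle. -/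
theorem clusterChordal_implies_hamiltonian {V : Type*} [Fintype V] [DecidableEq V]
    (G : SimpleGraph V) [DecidableRel G.Adj]
    (htf : G.CliqueFree 3) (hcubic : ∀ v : V, G.degree v = 3)
    (v w : V) (hvw : G.Adj v w)
    (G1 G2 : SimpleGraph V)
    (hcluster : ∃ s : Setoid V, ∀ a b : V, G1.Adj a b ↔ (s.r a b ∧ a ≠ b))
    (hchordal : ∀ n, 4 ≤ n → ¬ HasInducedCycle G2 n)
    (hunion : G1 ⊔ G2 = G.deleteEdges {s(v, w)}) :
    ∃ c : ZMod (Fintype.card V) ≃ V,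
      ∀ i : ZMod (Fintype.card V), G.Adj (c i) (c (i + 1)) :=
  clusterChordal_implies_hamiltonian_general G htf hcubic v w hvw G1 G2 hcluster hchordal hunion
end
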